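/- arXiv:1204.4282 — 9 statements merged into one kernel-verified Lean document; each statement's English description precedes it below -/
import Mathlib

section
/- Realize the free vector lattice $FVL(A)$ as the vector sublattice of $\mathbb{R}^{\mathbb{R}^A}$ generated by the evaluation maps $\delta_a(\xi) = \xi(a)$. Then the real-valued vector lattice homomorphisms on $FVL(A)$ are precisely the evaluations at points of $\mathbb{R}^A$: $\omega$ is a lattice homomorphism $FVL(A) \to \mathbb{R}$ if and only if there exists $\xi \in \mathbb{R}^A$ with $\omega(f) = f(\xi)$ for all $f \in FVL(A)$. -/
def IsVectorSublattice {E : Type*} [AddCommGroup E] [Lattice E] [Module ℝ E]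
    (S : Set E) : Prop :=
  (0 : E) ∈ S ∧ (∀ x ∈ S, ∀ y ∈ S, x + y ∈ S) ∧ (∀ (c : ℝ), ∀ x ∈ S, c • x ∈ S) ∧
    (∀ x ∈ S, ∀ y ∈ S, x ⊔ y ∈ S) ∧ (∀ x ∈ S, ∀ y ∈ S, x ⊓ y ∈ S)

def latticeGen {E : Type*} [AddCommGroup E] [Lattice E] [Module ℝ E]
    (D : Set E) : Set E :=
  ⋂₀ {S : Set E | IsVectorSublattice S ∧ D ⊆ S}

/-!
Since the defining conditions of a real-valued lattice homomorphism are equations, the set where two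
of them agree is a vector sublattice; hence a lattice homomorphism on the sublattice generated by
the `δ_a` is determined by its values `ξ a := ω δ_a`, and so coincides with evaluation at `ξ`.
Preservation of `⊓` comes for free from `f ⊓ g + f ⊔ g = f + g`.
-/

section

variable {E : Type*} [AddCommGroup E] [Lattice E] [Module ℝ E]

def IsLatticeHomOn (S : Set E) (ω : E → ℝ) : Prop :=
  (∀ f ∈ S, ∀ g ∈ S, ω (f + g) = ω f + ω g) ∧
    (∀ (c : ℝ), ∀ f ∈ S, ω (c • f) = c * ω f) ∧
    (∀ f ∈ S, ∀ g ∈ S, ω (f ⊔ g) = ω f ⊔ ω g)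

theorem isVectorSublattice_latticeGen (D : Set E) : IsVectorSublattice (latticeGen D) :=
  ⟨fun _ hS => hS.1.1,
    fun _ hx _ hy S hS => hS.1.2.1 _ (hx S hS) _ (hy S hS),
    fun c _ hx S hS => hS.1.2.2.1 c _ (hx S hS),
    fun _ hx _ hy S hS => hS.1.2.2.2.1 _ (hx S hS) _ (hy S hS),
    fun _ hx _ hy S hS => hS.1.2.2.2.2 _ (hx S hS) _ (hy S hS)⟩

theorem subset_latticeGen (D : Set E) : D ⊆ latticeGen D :=
  fun _ hx _ hS => hS.2 hx

theorem latticeGen_subset {D S : Set E} (hS : IsVectorSublattice S) (hDS : D ⊆ S) :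
    latticeGen D ⊆ S :=
  Set.sInter_subset_of_mem ⟨hS, hDS⟩

namespace IsLatticeHomOn

variable {S : Set E} {ω φ : E → ℝ}

theorem map_zero (hS : IsVectorSublattice S) (hω : IsLatticeHomOn S ω) : ω 0 = 0 := by
  have h := hω.1 0 hS.1 0 hS.1
  rw [add_zero] at h
  linarith

theorem map_inf [AddLeftMono E] (hS : IsVectorSublattice S) (hω : IsLatticeHomOn S ω) {f g : E} (hf : f ∈ S)
    (hg : g ∈ S) : ω (f ⊓ g) = ω f ⊓ ω g := by
  have h := hω.1 _ (hS.2.2.2.2 f hf g hg) _ (hS.2.2.2.1 f hf g hg)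
  rw [inf_add_sup, hω.1 f hf g hg, hω.2.2 f hf g hg, ← inf_add_sup (ω f) (ω g)] at h
  linarith

theorem congr (hφ : IsLatticeHomOn S φ) (hS : IsVectorSublattice S) (h : Set.EqOn ω φ S) :
    IsLatticeHomOn S ω := by
  refine ⟨fun f hf g hg => ?_, fun c f hf => ?_, fun f hf g hg => ?_⟩
  · rw [h (hS.2.1 f hf g hg), h hf, h hg, hφ.1 f hf g hg]
  · rw [h (hS.2.2.1 c f hf), h hf, hφ.2.1 c f hf]
  · rw [h (hS.2.2.2.1 f hf g hg), h hf, h hg, hφ.2.2 f hf g hg]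

theorem isVectorSublattice_eqLocus [AddLeftMono E] (hS : IsVectorSublattice S) (hω : IsLatticeHomOn S ω)
    (hφ : IsLatticeHomOn S φ) : IsVectorSublattice {f | f ∈ S ∧ ω f = φ f} := by
  refine ⟨⟨hS.1, by rw [hω.map_zero hS, hφ.map_zero hS]⟩, ?_, ?_, ?_, ?_⟩
  · rintro f ⟨hf, hf'⟩ g ⟨hg, hg'⟩
    exact ⟨hS.2.1 f hf g hg, by rw [hω.1 f hf g hg, hφ.1 f hf g hg, hf', hg']⟩
  · rintro c f ⟨hf, hf'⟩
    exact ⟨hS.2.2.1 c f hf, by rw [hω.2.1 c f hf, hφ.2.1 c f hf, hf']⟩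
  · rintro f ⟨hf, hf'⟩ g ⟨hg, hg'⟩
    exact ⟨hS.2.2.2.1 f hf g hg, by rw [hω.2.2 f hf g hg, hφ.2.2 f hf g hg, hf', hg']⟩
  · rintro f ⟨hf, hf'⟩ g ⟨hg, hg'⟩
    exact ⟨hS.2.2.2.2 f hf g hg, by rw [hω.map_inf hS hf hg, hφ.map_inf hS hf hg, hf', hg']⟩

theorem eqOn_latticeGen [AddLeftMono E] {D : Set E} (hω : IsLatticeHomOn (latticeGen D) ω)
    (hφ : IsLatticeHomOn (latticeGen D) φ) (h : Set.EqOn ω φ D) :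
    Set.EqOn ω φ (latticeGen D) := by
  have hL := isVectorSublattice_latticeGen D
  intro f hf
  refine (latticeGen_subset (hω.isVectorSublattice_eqLocus hL hφ) ?_ hf).2
  exact fun g hg => ⟨subset_latticeGen D hg, h hg⟩

end IsLatticeHomOn

end

theorem isLatticeHomOn_eval {X : Type*} (S : Set (X → ℝ)) (x : X) :
    IsLatticeHomOn S (fun f => f x) :=
  ⟨fun _ _ _ _ => rfl, fun _ _ _ => rfl, fun _ _ _ _ => rfl⟩

theorem stmt_8_general {A : Type*}
    (L : Set ((A → ℝ) → ℝ))
    (hL : L = latticeGen (Set.range (fun (a : A) => fun ξ : A → ℝ => ξ a)))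
    (ω : ((A → ℝ) → ℝ) → ℝ) :
    ((∀ f ∈ L, ∀ g ∈ L, ω (f + g) = ω f + ω g) ∧
     (∀ (c : ℝ), ∀ f ∈ L, ω (c • f) = c * ω f) ∧
     (∀ f ∈ L, ∀ g ∈ L, ω (f ⊔ g) = ω f ⊔ ω g)) ↔
      ∃ ξ : A → ℝ, ∀ f ∈ L, ω f = f ξ := by
  change IsLatticeHomOn L ω ↔ _
  subst hL
  constructor
  · intro hω
    refine ⟨fun a => ω (fun η => η a), fun f hf => ?_⟩
    refine hω.eqOn_latticeGen (isLatticeHomOn_eval _ _) ?_ hf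
    rintro _ ⟨a, rfl⟩
    rfl
  · rintro ⟨ξ, hξ⟩
    exact (isLatticeHomOn_eval _ ξ).congr (isVectorSublattice_latticeGen _) hξ

/-- realizing `FVL(A)` as the sublattice `L` of `ℝ^(ℝ^A)` generated by
the evaluations `δ_a : ξ ↦ ξ a`, a functional `ω` on `L` is a (linear) lattice
homomorphism iff it is evaluation at some point `ξ ∈ ℝ^A`. -/
theorem stmt_8 {A : Type*} [Nonempty A]
    (L : Set ((A → ℝ) → ℝ))
    (hL : L = latticeGen (Set.range (fun (a : A) => fun ξ : A → ℝ => ξ a)))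
    (ω : ((A → ℝ) → ℝ) → ℝ) :
    ((∀ f ∈ L, ∀ g ∈ L, ω (f + g) = ω f + ω g) ∧
     (∀ (c : ℝ), ∀ f ∈ L, ω (c • f) = c * ω f) ∧
     (∀ f ∈ L, ∀ g ∈ L, ω (f ⊔ g) = ω f ⊔ ω g)) ↔
      ∃ ξ : A → ℝ, ∀ f ∈ L, ω f = f ξ :=
  stmt_8_general L hL ω
end

section
/- The restriction map $R : H(\mathbb{R}^{\mathbb{N}}) \to H(\Delta_{\mathbb{N}})$ is not surjective: the function $g(\xi) = \sum_{k=1}^{\infty} 2^{-k} \xi(k)$ belongs to $H(\Delta_{\mathbb{N}})$ but is not the restriction of any continuous homogeneous function on $\mathbb{R}^{\mathbb{N}}$. -/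
open Set Filter Topology

/-!
`Pi.single n c` tends to `0` in the product topology for *any* choice of
heights `c n`. For a continuous positively homogeneous `f` we may scale so that
`f (Pi.single n c) = c * f (Pi.single n 1)` has absolute value `1` whenever
`f (Pi.single n 1) ≠ 0`; continuity at `0` then forces `f (Pi.single n 1) = 0` for all large `n`.
The function `g` has `g (Pi.single n 1) = 2⁻¹ ^ (n + 1) ≠ 0`, so it admits no such extension.
-/

theorem Pi.tendsto_single_cofinite_nhds_zero {ι M : Type*} [DecidableEq ι] [Zero M]
    [TopologicalSpace M] (c : ι → M) :
    Tendsto (fun i => Pi.single i (c i)) cofinite (𝓝 0) := by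
  refine tendsto_pi_nhds.2 fun k => tendsto_const_nhds.congr' ?_
  filter_upwards [eventually_cofinite_ne k] with i hik
  exact (Pi.single_eq_of_ne' (M := fun _ => M) hik (c i)).symm

theorem eventually_apply_single_one_eq_zero {ι : Type*} [DecidableEq ι] {f : (ι → ℝ) → ℝ}
    (hf : Continuous f) (hhom : ∀ t : ℝ, 0 ≤ t → ∀ ξ, f (t • ξ) = t * f ξ) :
    ∀ᶠ i in cofinite, f (Pi.single i 1) = 0 := by
  set c : ι → ℝ := fun i => |f (Pi.single i 1)|⁻¹
  have hf0 : f 0 = 0 := by simpa using hhom 0 le_rfl 0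
  have hscaled : Tendsto (fun i => c i * f (Pi.single i 1)) cofinite (𝓝 0) := by
    have := (hf.tendsto 0).comp (Pi.tendsto_single_cofinite_nhds_zero c)
    rw [hf0] at this
    refine this.congr fun i => ?_
    rw [Function.comp_apply, ← hhom _ (inv_nonneg.2 (abs_nonneg _)), ← Pi.single_smul', smul_eq_mul,
      mul_one]
  have habs : Tendsto (fun i => |c i * f (Pi.single i 1)|) cofinite (𝓝 0) := by
    simpa only [abs_zero] using hscaled.abs
  filter_upwards [habs.eventually_lt_const one_pos] with i hi
  by_contra hne
  rw [abs_mul, abs_inv, abs_abs, inv_mul_cancel₀ (abs_ne_zero.2 hne)] at hi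
  exact lt_irrefl _ hi

theorem continuousOn_tsum_div_two_pow_succ (C : ℝ) :
    ContinuousOn (fun ξ : ℕ → ℝ => ∑' k, ξ k / 2 ^ (k + 1)) {ξ | ∀ k, |ξ k| ≤ C} := by
  refine continuousOn_tsum (u := fun k => C / 2 / 2 ^ k)
    (fun k => ((continuous_apply k).div_const _).continuousOn) (summable_geometric_two' C) ?_
  intro k ξ hξ
  rw [Real.norm_eq_abs, abs_div, abs_of_pos (by positivity : (0 : ℝ) < 2 ^ (k + 1)), pow_succ,
    mul_comm, ← div_div]
  gcongr
  exact hξ k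

/-- the restriction map `H(ℝ^ℕ) → H(Δ_ℕ)` is not surjective:
`g ξ = ∑ₖ 2^{-k} ξ(k)` belongs to `H(Δ_ℕ)` but is not the restriction of any
continuous homogeneous function on `ℝ^ℕ`. -/
theorem stmt_10
    (D : Set (ℕ → ℝ)) (hD : D = {ξ : ℕ → ℝ | ∀ k, |ξ k| ≤ 1})
    (g : (ℕ → ℝ) → ℝ) (hg : ∀ ξ, g ξ = ∑' k : ℕ, ξ k / 2 ^ (k + 1)) :
    (ContinuousOn g D ∧
      ∀ t : ℝ, t ∈ Icc (0 : ℝ) 1 → ∀ ξ ∈ D, t • ξ ∈ D ∧ g (t • ξ) = t * g ξ) ∧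
    ¬ ∃ f : (ℕ → ℝ) → ℝ, Continuous f ∧
        (∀ t : ℝ, 0 ≤ t → ∀ ξ : ℕ → ℝ, f (t • ξ) = t * f ξ) ∧
        ∀ ξ ∈ D, f ξ = g ξ := by
  subst hD
  obtain rfl : g = fun ξ => ∑' k : ℕ, ξ k / 2 ^ (k + 1) := funext hg
  refine ⟨⟨continuousOn_tsum_div_two_pow_succ 1, fun t ht ξ hξ => ⟨fun k => ?_, ?_⟩⟩, ?_⟩
  · simpa [abs_mul, abs_of_nonneg ht.1] using mul_le_one₀ ht.2 (abs_nonneg _) (hξ k)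
  · simp only [Pi.smul_apply, smul_eq_mul, mul_div_assoc, tsum_mul_left]
  · rintro ⟨f, hf, hhom, hfg⟩
    obtain ⟨n, hn⟩ := (eventually_apply_single_one_eq_zero hf hhom).exists
    have hsingle : Pi.single n 1 ∈ {ξ : ℕ → ℝ | ∀ k, |ξ k| ≤ 1} := fun k => by
      rcases eq_or_ne k n with rfl | hk <;> simp [*]
    rw [hfg _ hsingle] at hn
    simp [Pi.single_apply, ite_div] at hn
end

section
/- Let $A$ be a nonempty set and realize $FVL(A) \subseteq \mathbb{R}^{\mathbb{R}^A}$. If a positive linear functional $\phi$ on $FVL(A)$ satisfies $\phi(|\delta_a|) = 0$ for every $a \in A$, then $\phi = 0$. -/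
section VectorSublattice

variable {E : Type*} [AddCommGroup E] [Lattice E] [Module ℝ E]

theorem IsVectorSublattice.sInter {𝒮 : Set (Set E)} (h𝒮 : ∀ S ∈ 𝒮, IsVectorSublattice S) :
    IsVectorSublattice (⋂₀ 𝒮) := by
  simp only [IsVectorSublattice, Set.mem_sInter] at h𝒮 ⊢
  exact ⟨fun S hS => (h𝒮 S hS).1,
    fun x hx y hy S hS => (h𝒮 S hS).2.1 x (hx S hS) y (hy S hS),
    fun c x hx S hS => (h𝒮 S hS).2.2.1 c x (hx S hS),
    fun x hx y hy S hS => (h𝒮 S hS).2.2.2.1 x (hx S hS) y (hy S hS),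
    fun x hx y hy S hS => (h𝒮 S hS).2.2.2.2 x (hx S hS) y (hy S hS)⟩

namespace IsVectorSublattice

variable {L : Set E} {f g : E}

theorem zero_mem (hL : IsVectorSublattice L) : (0 : E) ∈ L := hL.1

theorem add_mem (hL : IsVectorSublattice L) (hf : f ∈ L) (hg : g ∈ L) : f + g ∈ L :=
  hL.2.1 f hf g hg

theorem smul_mem (hL : IsVectorSublattice L) (c : ℝ) (hf : f ∈ L) : c • f ∈ L := hL.2.2.1 c f hf

theorem sup_mem (hL : IsVectorSublattice L) (hf : f ∈ L) (hg : g ∈ L) : f ⊔ g ∈ L :=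
  hL.2.2.2.1 f hf g hg

theorem inf_mem (hL : IsVectorSublattice L) (hf : f ∈ L) (hg : g ∈ L) : f ⊓ g ∈ L :=
  hL.2.2.2.2 f hf g hg

theorem neg_mem (hL : IsVectorSublattice L) (hf : f ∈ L) : -f ∈ L := by
  simpa using hL.smul_mem (-1) hf

theorem abs_mem (hL : IsVectorSublattice L) (hf : f ∈ L) : |f| ∈ L :=
  hL.sup_mem hf (hL.neg_mem hf)

end IsVectorSublattice

structure IsPositiveLinearOn (L : Set E) (φ : E → ℝ) : Prop where
  map_add : ∀ f ∈ L, ∀ g ∈ L, φ (f + g) = φ f + φ g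
  map_smul : ∀ (c : ℝ), ∀ f ∈ L, φ (c • f) = c * φ f
  nonneg : ∀ f ∈ L, 0 ≤ f → 0 ≤ φ f

namespace IsPositiveLinearOn

variable {L : Set E} {φ : E → ℝ} {f g h : E}

theorem map_zero (hφ : IsPositiveLinearOn L φ) (hL : IsVectorSublattice L) : φ 0 = 0 := by
  simpa using hφ.map_smul 0 0 hL.zero_mem

theorem map_neg (hφ : IsPositiveLinearOn L φ) (hf : f ∈ L) : φ (-f) = -φ f := by
  simpa using hφ.map_smul (-1) f hf

variable [IsOrderedAddMonoid E]

theorem mono (hφ : IsPositiveLinearOn L φ) (hL : IsVectorSublattice L) (hf : f ∈ L) (hg : g ∈ L)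
    (hfg : f ≤ g) : φ f ≤ φ g := by
  have h := hφ.nonneg (g + -f) (hL.add_mem hg (hL.neg_mem hf))
    (by rwa [← sub_eq_add_neg, sub_nonneg])
  rw [hφ.map_add _ hg _ (hL.neg_mem hf), hφ.map_neg hf] at h
  linarith

theorem abs_map_le_map_abs (hφ : IsPositiveLinearOn L φ) (hL : IsVectorSublattice L)
    (hf : f ∈ L) : |φ f| ≤ φ |f| := by
  have habs := hL.abs_mem hf
  refine abs_le.2 ⟨?_, hφ.mono hL hf habs (le_abs_self f)⟩
  rw [← hφ.map_neg habs]
  exact hφ.mono hL (hL.neg_mem habs) hf (neg_le.1 (neg_le_abs f))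

theorem map_abs_eq_zero_of_abs_le_add (hφ : IsPositiveLinearOn L φ) (hL : IsVectorSublattice L)
    (hh : h ∈ L) (hf : f ∈ L) (hg : g ∈ L) (hf0 : φ |f| = 0) (hg0 : φ |g| = 0)
    (hle : |h| ≤ |f| + |g|) : φ |h| = 0 := by
  have upper := hφ.mono hL (hL.abs_mem hh) (hL.add_mem (hL.abs_mem hf) (hL.abs_mem hg)) hle
  rw [hφ.map_add _ (hL.abs_mem hf) _ (hL.abs_mem hg), hf0, hg0, add_zero] at upper
  exact le_antisymm upper (hφ.nonneg _ (hL.abs_mem hh) (abs_nonneg h))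

end IsPositiveLinearOn

end VectorSublattice

section RealFunctions

variable {X : Type*} {φ : (X → ℝ) → ℝ}

theorem IsPositiveLinearOn.isVectorSublattice_setOf_map_abs_eq_zero {L : Set (X → ℝ)}
    (hφ : IsPositiveLinearOn L φ) (hL : IsVectorSublattice L) :
    IsVectorSublattice {f | f ∈ L ∧ φ |f| = 0} := by
  have solid : ∀ {h f g : X → ℝ}, h ∈ L → f ∈ L ∧ φ |f| = 0 → g ∈ L ∧ φ |g| = 0 →
      (∀ x, |h x| ≤ |f x| + |g x|) → h ∈ L ∧ φ |h| = 0 :=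
    fun hh hf hg hle => ⟨hh, hφ.map_abs_eq_zero_of_abs_le_add hL hh hf.1 hg.1 hf.2 hg.2 hle⟩
  refine ⟨⟨hL.zero_mem, by simpa using hφ.map_zero hL⟩, ?_, ?_, ?_, ?_⟩
  · intro f hf g hg
    exact solid (hL.add_mem hf.1 hg.1) hf hg fun x => abs_add_le (f x) (g x)
  · rintro c f ⟨hf, hf0⟩
    have habs : |c • f| = |c| • |f| := funext fun x => abs_mul c (f x)
    refine ⟨hL.smul_mem c hf, ?_⟩
    rw [habs, hφ.map_smul _ _ (hL.abs_mem hf), hf0, mul_zero]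
  · intro f hf g hg
    exact solid (hL.sup_mem hf.1 hg.1) hf hg fun x => abs_max_le_max_abs_abs.trans
      (max_le_add_of_nonneg (abs_nonneg _) (abs_nonneg _))
  · intro f hf g hg
    exact solid (hL.inf_mem hf.1 hg.1) hf hg fun x => abs_min_le_max_abs_abs.trans
      (max_le_add_of_nonneg (abs_nonneg _) (abs_nonneg _))

theorem IsPositiveLinearOn.eq_zero_of_map_abs_eq_zero_of_generators {D : Set (X → ℝ)}
    (hφ : IsPositiveLinearOn (latticeGen D) φ) (hD : ∀ d ∈ D, φ |d| = 0) :
    ∀ f ∈ latticeGen D, φ f = 0 := by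
  have hL := isVectorSublattice_latticeGen D
  have hnull : latticeGen D ⊆ {f | f ∈ latticeGen D ∧ φ |f| = 0} :=
    latticeGen_subset (hφ.isVectorSublattice_setOf_map_abs_eq_zero hL)
      fun d hd => ⟨subset_latticeGen D hd, hD d hd⟩
  intro f hf
  exact abs_nonpos_iff.1 ((hφ.abs_map_le_map_abs hL hf).trans (hnull hf).2.le)

end RealFunctions

theorem stmt_11_general {A : Type*}
    (L : Set ((A → ℝ) → ℝ))
    (hL : L = latticeGen (Set.range (fun (a : A) => fun ξ : A → ℝ => ξ a)))
    (φ : ((A → ℝ) → ℝ) → ℝ)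
    (hadd : ∀ f ∈ L, ∀ g ∈ L, φ (f + g) = φ f + φ g)
    (hsmul : ∀ (c : ℝ), ∀ f ∈ L, φ (c • f) = c * φ f)
    (hpos : ∀ f ∈ L, 0 ≤ f → 0 ≤ φ f)
    (hδ : ∀ a : A, φ (fun ξ : A → ℝ => |ξ a|) = 0) :
    ∀ f ∈ L, φ f = 0 := by
  subst hL
  refine IsPositiveLinearOn.eq_zero_of_map_abs_eq_zero_of_generators ⟨hadd, hsmul, hpos⟩ ?_
  rintro _ ⟨a, rfl⟩
  exact hδ a

/-- realizing `FVL(A)` as the sublattice `L` of `ℝ^(ℝ^A)` generated by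
the evaluations `δ_a`, any positive linear functional `φ` on `L` vanishing on every
`|δ_a|` vanishes identically. -/
theorem stmt_11 {A : Type*} [Nonempty A]
    (L : Set ((A → ℝ) → ℝ))
    (hL : L = latticeGen (Set.range (fun (a : A) => fun ξ : A → ℝ => ξ a)))
    (φ : ((A → ℝ) → ℝ) → ℝ)
    (hadd : ∀ f ∈ L, ∀ g ∈ L, φ (f + g) = φ f + φ g)
    (hsmul : ∀ (c : ℝ), ∀ f ∈ L, φ (c • f) = c * φ f)
    (hpos : ∀ f ∈ L, 0 ≤ f → 0 ≤ φ f)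
    (hδ : ∀ a : A, φ (fun ξ : A → ℝ => |ξ a|) = 0) :
    ∀ f ∈ L, φ f = 0 :=
  stmt_11_general L hL φ hadd hsmul hpos hδ
end

section
/- Let $P$ be a contractive lattice homomorphism on a Banach lattice $X$ which is a projection onto a closed sublattice $Y$. Then $P^*(X^*) = \{\phi \in X^* : \phi|_{\ker P} = 0\}$ is a weak*-closed band in $X^*$, and it is isometrically order isomorphic to $Y^*$ via the map $\phi \mapsto \phi \circ P$ from $Y^*$. -/
open NormedSpace

/-!
The kernel of a lattice homomorphism is an ideal, so a functional dominated in modulus by one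
that annihilates `ker P` is nonpositive on the whole order interval `[-|x|, |x|]` of each
`x ∈ ker P`, hence annihilates `ker P` as well. On the annihilator of `ker P`, restriction to `Y`
inverts `φ ↦ φ ∘ P`; both maps are contractive (`‖P‖ ≤ 1`), hence isometric, and both are positive.
-/

section LatticeHom

variable {α β F : Type*} [Lattice α] [AddCommGroup α] [Lattice β] [AddCommGroup β]
  [FunLike F α β] [AddMonoidHomClass F α β]

theorem map_abs_of_map_sup {f : F} (hf : ∀ x y, f (x ⊔ y) = f x ⊔ f y) (x : α) :
    f |x| = |f x| := by
  rw [abs, hf, map_neg, abs]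

theorem map_nonneg_of_map_sup {f : F} (hf : ∀ x y, f (x ⊔ y) = f x ⊔ f y) {x : α}
    (hx : 0 ≤ x) : 0 ≤ f x :=
  map_zero f ▸ OrderHomClass.mono (⟨f, hf⟩ : SupHom α β) hx

theorem map_eq_zero_of_abs_le [IsOrderedAddMonoid α] [IsOrderedAddMonoid β] {f : F}
    (hf : ∀ x y, f (x ⊔ y) = f x ⊔ f y) {x y : α} (hx : f x = 0) (hyx : |y| ≤ |x|) :
    f y = 0 := by
  have : |f y| ≤ |f x| := by
    rw [← map_abs_of_map_sup hf, ← map_abs_of_map_sup hf]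
    exact OrderHomClass.mono (⟨f, hf⟩ : SupHom α β) hyx
  rw [hx, abs_zero] at this
  exact le_antisymm ((le_abs_self _).trans this) (neg_nonpos.mp ((neg_le_abs _).trans this))

end LatticeHom

section Band

variable {X : Type*} [NormedAddCommGroup X] [Lattice X] [HasSolidNorm X] [NormedSpace ℝ X]

theorem StrongDual.apply_le_sSup_image_abs_le (ψ : StrongDual ℝ X) {x y : X} (hyx : |y| ≤ x) :
    ψ y ≤ sSup ((fun y => ψ y) '' {y : X | |y| ≤ x}) := by
  refine le_csSup ⟨‖ψ‖ * ‖x‖, ?_⟩ ⟨y, hyx, rfl⟩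
  rintro _ ⟨z, hzx, rfl⟩
  have hzx' : ‖z‖ ≤ ‖x‖ := HasSolidNorm.solid (hzx.trans (le_abs_self x))
  calc ψ z ≤ ‖ψ z‖ := Real.le_norm_self _
    _ ≤ ‖ψ‖ * ‖z‖ := ψ.le_opNorm z
    _ ≤ ‖ψ‖ * ‖x‖ := by gcongr

theorem StrongDual.apply_eq_zero_of_sSup_le [IsOrderedAddMonoid X] {K : Set X}
    (hK : ∀ x ∈ K, ∀ y, |y| ≤ |x| → y ∈ K) {φ ψ : StrongDual ℝ X} (hφ : ∀ x ∈ K, φ x = 0)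
    (hψφ : ∀ x : X, 0 ≤ x → sSup ((fun y => ψ y) '' {y : X | |y| ≤ x}) ≤
      sSup ((fun y => φ y) '' {y : X | |y| ≤ x}))
    {x : X} (hx : x ∈ K) : ψ x = 0 := by
  have hφ_sSup : sSup ((fun y => φ y) '' {y : X | |y| ≤ |x|}) ≤ 0 := by
    refine csSup_le ⟨0, 0, by simp, map_zero φ⟩ ?_
    rintro _ ⟨y, hy, rfl⟩
    exact (hφ y (hK x hx y hy)).le
  have hψ_nonpos : ∀ y : X, |y| ≤ |x| → ψ y ≤ 0 := fun y hy =>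
    ((ψ.apply_le_sSup_image_abs_le hy).trans (hψφ |x| (abs_nonneg x))).trans hφ_sSup
  have hx_pos := hψ_nonpos x le_rfl
  have hx_neg := hψ_nonpos (-x) (abs_neg x).le
  rw [map_neg] at hx_neg
  linarith

end Band

section Annihilator

variable {E : Type*} [NormedAddCommGroup E] [NormedSpace ℝ E]

theorem WeakDual.isClosed_setOf_forall_apply_eq_zero (S : Set E) :
    IsClosed {φ : WeakDual ℝ E | ∀ x ∈ S, φ x = 0} := by
  simp only [Set.ofPred_forall]
  exact isClosed_biInter fun x _ => isClosed_eq (WeakDual.eval_continuous x) continuous_const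

theorem ContinuousLinearMap.comp_eq_self_of_idempotent {F : Type*} [NormedAddCommGroup F]
    [NormedSpace ℝ F] {P : E →L[ℝ] E} (hPP : ∀ x, P (P x) = P x) {φ : E →L[ℝ] F}
    (hφ : ∀ x, P x = 0 → φ x = 0) : φ.comp P = φ := by
  ext x
  have : φ (x - P x) = 0 := hφ _ (by rw [map_sub, hPP, sub_self])
  rwa [map_sub, sub_eq_zero, eq_comm] at this

theorem ContinuousLinearMap.range_precomp_of_idempotent {P : E →L[ℝ] E}
    (hPP : ∀ x, P (P x) = P x) :
    Set.range (fun φ : StrongDual ℝ E => φ.comp P) = {φ | ∀ x, P x = 0 → φ x = 0} := by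
  ext φ
  constructor
  · rintro ⟨ψ, rfl⟩ x hx
    simp [hx]
  · exact fun hφ => ⟨φ, comp_eq_self_of_idempotent hPP hφ⟩

end Annihilator

section DualExtend

variable {X : Type*} [NormedAddCommGroup X] [NormedSpace ℝ X] (P : X →L[ℝ] X)
  {Y : Submodule ℝ X} (hPY : ∀ x, P x ∈ Y)

def dualExtend (φ : StrongDual ℝ Y) : StrongDual ℝ X :=
  φ.comp (P.codRestrict Y hPY)

variable {P hPY}

theorem dualExtend_apply (φ : StrongDual ℝ Y) (x : X) :
    dualExtend P hPY φ x = φ ⟨P x, hPY x⟩ :=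
  rfl

theorem dualExtend_apply_coe (hfix : ∀ y ∈ Y, P y = y) (φ : StrongDual ℝ Y) (y : Y) :
    dualExtend P hPY φ y = φ y := by
  rw [dualExtend_apply]
  exact congrArg φ (Subtype.ext (hfix y y.2))

theorem dualExtend_apply_map (hPP : ∀ x, P (P x) = P x) (φ : StrongDual ℝ Y) (x : X) :
    dualExtend P hPY φ (P x) = dualExtend P hPY φ x := by
  simp only [dualExtend_apply, hPP]

theorem dualExtend_comp_subtypeL (hfix : ∀ y ∈ Y, P y = y) (φ : StrongDual ℝ Y) :
    (dualExtend P hPY φ).comp Y.subtypeL = φ := by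
  ext y
  exact dualExtend_apply_coe hfix φ y

theorem dualExtend_injective (hfix : ∀ y ∈ Y, P y = y) :
    Function.Injective (dualExtend P hPY) :=
  Function.LeftInverse.injective (g := fun ψ => ψ.comp Y.subtypeL) fun φ =>
    dualExtend_comp_subtypeL hfix φ

theorem range_dualExtend (hPP : ∀ x, P (P x) = P x) :
    Set.range (dualExtend P hPY) = {φ : StrongDual ℝ X | ∀ x, P x = 0 → φ x = 0} := by
  rw [← ContinuousLinearMap.range_precomp_of_idempotent hPP]
  ext φ
  constructor
  · rintro ⟨ψ, rfl⟩
    exact ⟨dualExtend P hPY ψ, by ext x; exact dualExtend_apply_map hPP ψ x⟩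
  · rintro ⟨ψ, rfl⟩
    exact ⟨ψ.comp Y.subtypeL, by ext x; rfl⟩

theorem norm_dualExtend (hP1 : ‖P‖ ≤ 1) (hfix : ∀ y ∈ Y, P y = y) (φ : StrongDual ℝ Y) :
    ‖dualExtend P hPY φ‖ = ‖φ‖ := by
  apply le_antisymm
  · refine ContinuousLinearMap.opNorm_le_bound _ (norm_nonneg φ) fun x => ?_
    calc ‖dualExtend P hPY φ x‖ ≤ ‖φ‖ * ‖P x‖ := φ.le_opNorm _
      _ ≤ ‖φ‖ * ‖x‖ := by gcongr; simpa using P.le_of_opNorm_le hP1 x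
  · calc ‖φ‖ = ‖(dualExtend P hPY φ).comp Y.subtypeL‖ := by rw [dualExtend_comp_subtypeL hfix]
      _ ≤ ‖dualExtend P hPY φ‖ * ‖Y.subtypeL‖ := ContinuousLinearMap.opNorm_comp_le _ _
      _ ≤ ‖dualExtend P hPY φ‖ := mul_le_of_le_one_right (norm_nonneg _) Y.norm_subtypeL_le

theorem dualExtend_le_dualExtend_iff [Lattice X] (hpos : ∀ x, 0 ≤ x → 0 ≤ P x)
    (hfix : ∀ y ∈ Y, P y = y) (φ ψ : StrongDual ℝ Y) :
    (∀ x : X, 0 ≤ x → dualExtend P hPY φ x ≤ dualExtend P hPY ψ x) ↔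
      ∀ y : Y, 0 ≤ (y : X) → φ y ≤ ψ y := by
  constructor
  · intro h y hy
    simpa only [dualExtend_apply_coe hfix] using h y hy
  · exact fun h x hx => h ⟨P x, hPY x⟩ (hpos x hx)

end DualExtend

theorem stmt_14_general {X : Type*} [NormedAddCommGroup X] [Lattice X] [IsOrderedAddMonoid X]
    [HasSolidNorm X] [NormedSpace ℝ X]
    (P : X →L[ℝ] X) (hP1 : ‖P‖ ≤ 1) (hPlat : ∀ x y, P (x ⊔ y) = P x ⊔ P y)
    (hPP : ∀ x, P (P x) = P x)
    (Y : Submodule ℝ X)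
    (hrange : Set.range P = (Y : Set X)) :
    -- `P^*(X^*)` is exactly the annihilator of `ker P`
    (Set.range (fun φ : StrongDual ℝ X => φ.comp P) =
      {φ : StrongDual ℝ X | ∀ x, P x = 0 → φ x = 0}) ∧
    -- it is weak*-closed
    IsClosed {φ : WeakDual ℝ X | ∀ x, P x = 0 → φ x = 0} ∧
    -- it is a band: it is solid for the moduli `|φ|(x) = sup {φ y : |y| ≤ x}`
    (∀ φ ∈ {φ : StrongDual ℝ X | ∀ x, P x = 0 → φ x = 0}, ∀ ψ : StrongDual ℝ X,
      (∀ x : X, 0 ≤ x →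
        sSup ((fun y => ψ y) '' {y : X | |y| ≤ x}) ≤
          sSup ((fun y => φ y) '' {y : X | |y| ≤ x})) →
      ψ ∈ {φ : StrongDual ℝ X | ∀ x, P x = 0 → φ x = 0}) ∧
    -- and `φ ↦ φ ∘ P` is an isometric order isomorphism of `Y^*` onto it
    ∃ J : StrongDual ℝ Y → StrongDual ℝ X,
      (∀ (φ : StrongDual ℝ Y) (y : Y), J φ (y : X) = φ y) ∧
      (∀ (φ : StrongDual ℝ Y) (x : X), J φ (P x) = J φ x) ∧
      Function.Injective J ∧
      Set.range J = {φ : StrongDual ℝ X | ∀ x, P x = 0 → φ x = 0} ∧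
      (∀ φ, ‖J φ‖ = ‖φ‖) ∧
      (∀ φ ψ : StrongDual ℝ Y,
        (∀ y : Y, 0 ≤ (y : X) → φ y ≤ ψ y) ↔ (∀ x : X, 0 ≤ x → J φ x ≤ J ψ x)) := by
  have hPY : ∀ x, P x ∈ Y := fun x => by
    rw [← SetLike.mem_coe, ← hrange]; exact Set.mem_range_self x
  have hfix : ∀ y ∈ Y, P y = y := by
    intro y hy
    obtain ⟨z, rfl⟩ : y ∈ Set.range P := hrange ▸ hy
    exact hPP z
  refine ⟨ContinuousLinearMap.range_precomp_of_idempotent hPP,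
    WeakDual.isClosed_setOf_forall_apply_eq_zero {x | P x = 0},
    fun φ hφ ψ hψφ x hx => StrongDual.apply_eq_zero_of_sSup_le
      (K := {x | P x = 0}) (fun x hx y hyx => map_eq_zero_of_abs_le hPlat hx hyx) hφ hψφ hx,
    dualExtend P hPY, dualExtend_apply_coe hfix, dualExtend_apply_map hPP,
    dualExtend_injective hfix, range_dualExtend hPP, norm_dualExtend hP1 hfix,
    fun φ ψ => (dualExtend_le_dualExtend_iff (fun x hx => map_nonneg_of_map_sup hPlat hx)
      hfix φ ψ).symm⟩

/-- for a contractive lattice homomorphism projection `P` of a Banach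
lattice `X` onto a closed sublattice `Y`, the set `P^*(X^*) = {φ : φ|_{ker P} = 0}`
is a weak*-closed band in `X^*`, isometrically order isomorphic to `Y^*` via
`φ ↦ φ ∘ P`. -/
theorem stmt_14 {X : Type*} [NormedAddCommGroup X] [Lattice X] [IsOrderedAddMonoid X]
    [HasSolidNorm X] [NormedSpace ℝ X]
    [CompleteSpace X]
    (P : X →L[ℝ] X) (hP1 : ‖P‖ ≤ 1) (hPlat : ∀ x y, P (x ⊔ y) = P x ⊔ P y)
    (hPP : ∀ x, P (P x) = P x)
    (Y : Submodule ℝ X) (hYcl : IsClosed (Y : Set X))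
    (hYlat : ∀ x ∈ Y, ∀ y ∈ Y, x ⊔ y ∈ Y)
    (hrange : Set.range P = (Y : Set X)) :
    -- `P^*(X^*)` is exactly the annihilator of `ker P`
    (Set.range (fun φ : StrongDual ℝ X => φ.comp P) =
      {φ : StrongDual ℝ X | ∀ x, P x = 0 → φ x = 0}) ∧
    -- it is weak*-closed
    IsClosed {φ : WeakDual ℝ X | ∀ x, P x = 0 → φ x = 0} ∧
    -- it is a band: it is solid for the moduli `|φ|(x) = sup {φ y : |y| ≤ x}`
    (∀ φ ∈ {φ : StrongDual ℝ X | ∀ x, P x = 0 → φ x = 0}, ∀ ψ : StrongDual ℝ X,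
      (∀ x : X, 0 ≤ x →
        sSup ((fun y => ψ y) '' {y : X | |y| ≤ x}) ≤
          sSup ((fun y => φ y) '' {y : X | |y| ≤ x})) →
      ψ ∈ {φ : StrongDual ℝ X | ∀ x, P x = 0 → φ x = 0}) ∧
    -- and `φ ↦ φ ∘ P` is an isometric order isomorphism of `Y^*` onto it
    ∃ J : StrongDual ℝ Y → StrongDual ℝ X,
      (∀ (φ : StrongDual ℝ Y) (y : Y), J φ (y : X) = φ y) ∧
      (∀ (φ : StrongDual ℝ Y) (x : X), J φ (P x) = J φ x) ∧
      Function.Injective J ∧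
      Set.range J = {φ : StrongDual ℝ X | ∀ x, P x = 0 → φ x = 0} ∧
      (∀ φ, ‖J φ‖ = ‖φ‖) ∧
      (∀ φ ψ : StrongDual ℝ Y,
        (∀ y : Y, 0 ≤ (y : X) → φ y ≤ ψ y) ↔ (∀ x : X, 0 ≤ x → J φ x ≤ J ψ x)) :=
  stmt_14_general P hP1 hPlat hPP Y hrange
end

section
/- Let $X$ be a Hausdorff topological space and $L$ a vector sublattice of $C(X)$. For $f \in C(X)$ let $O_f = \{x : f(x) \neq 0\}$ and $O_L = \bigcup_{f \in L} O_f$. If the open set $O_L$ is connected, then the only projection bands in $L$ are $\{0\}$ and $L$. -/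
/-!
A projection band `B` splits `L = B ⊕ Bᵈ`, and disjoint functions have disjoint supports. Hence
the union of the supports of `L` is covered by the two disjoint open sets `O_B` and `O_{Bᵈ}`,
both contained in it. By connectedness one of them is empty, i.e. `B = 0` or `Bᵈ = 0`.
-/

open Function

namespace ContinuousMap

variable {X : Type*} [TopologicalSpace X]

/-- The open set `O_S = ⋃_{f ∈ S} {x | f x ≠ 0}`. -/
def supportUnion (S : Set C(X, ℝ)) : Set X := ⋃ f ∈ S, support f

/-- The part of the disjoint complement `Bᵈ` lying in `L`. -/
def disjointCompl (L B : Set C(X, ℝ)) : Set C(X, ℝ) := {h ∈ L | ∀ b ∈ B, |b| ⊓ |h| = 0}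

lemma supportUnion_eq_setOf (S : Set C(X, ℝ)) :
    supportUnion S = {x | ∃ f ∈ S, f x ≠ 0} := by
  ext x
  simp [supportUnion]

lemma isOpen_supportUnion (S : Set C(X, ℝ)) : IsOpen (supportUnion S) :=
  isOpen_biUnion fun f _ => f.continuous.isOpen_support

lemma supportUnion_mono {S T : Set C(X, ℝ)} (h : S ⊆ T) : supportUnion S ⊆ supportUnion T :=
  Set.biUnion_subset_biUnion_left h

lemma supportUnion_eq_empty_iff {S : Set C(X, ℝ)} : supportUnion S = ∅ ↔ ∀ f ∈ S, f = 0 := by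
  simp only [supportUnion, Set.iUnion_eq_empty, support_eq_empty_iff, ← coe_zero,
    DFunLike.coe_fn_eq]

lemma disjoint_support_of_abs_inf_abs_eq_zero {f g : C(X, ℝ)} (h : |f| ⊓ |g| = 0) :
    Disjoint (support f) (support g) := by
  rw [Set.disjoint_left]
  intro x hf hg
  have hx : min |f x| |g x| = 0 := congrArg (· x) h
  rcases min_eq_iff.mp hx with ⟨hfx, -⟩ | ⟨hgx, -⟩
  · exact hf (abs_eq_zero.mp hfx)
  · exact hg (abs_eq_zero.mp hgx)

lemma disjoint_supportUnion_disjointCompl (L B : Set C(X, ℝ)) :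
    Disjoint (supportUnion B) (supportUnion (disjointCompl L B)) := by
  refine Set.disjoint_iUnion₂_left.mpr fun b hb => Set.disjoint_iUnion₂_right.mpr fun h hh => ?_
  exact disjoint_support_of_abs_inf_abs_eq_zero (hh.2 b hb)

lemma supportUnion_subset_of_decomposition {L B : Set C(X, ℝ)}
    (hproj : ∀ f ∈ L, ∃ g ∈ B, ∃ h ∈ disjointCompl L B, f = g + h) :
    supportUnion L ⊆ supportUnion B ∪ supportUnion (disjointCompl L B) := by
  simp only [supportUnion, Set.iUnion₂_subset_iff]
  intro f hf
  obtain ⟨g, hg, h, hh, rfl⟩ := hproj f hf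
  exact (support_add g h).trans <| Set.union_subset_union
    (Set.subset_biUnion_of_mem (u := fun f : C(X, ℝ) => support f) hg)
    (Set.subset_biUnion_of_mem (u := fun f : C(X, ℝ) => support f) hh)

theorem eq_zero_or_disjointCompl_eq_zero {L B : Set C(X, ℝ)} (hBL : B ⊆ L)
    (hconn : IsPreconnected (supportUnion L))
    (hproj : ∀ f ∈ L, ∃ g ∈ B, ∃ h ∈ disjointCompl L B, f = g + h) :
    (∀ g ∈ B, g = 0) ∨ ∀ h ∈ disjointCompl L B, h = 0 := by
  have hdisj := disjoint_supportUnion_disjointCompl L B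
  have hU : supportUnion B ⊆ supportUnion L := supportUnion_mono hBL
  have hV : supportUnion (disjointCompl L B) ⊆ supportUnion L :=
    supportUnion_mono fun _ hh => hh.1
  rcases hconn.subset_or_subset (isOpen_supportUnion _) (isOpen_supportUnion _) hdisj
      (supportUnion_subset_of_decomposition hproj) with hLU | hLV
  · exact .inr <| supportUnion_eq_empty_iff.mp <| hdisj.symm.eq_bot_of_le (hV.trans hLU)
  · exact .inl <| supportUnion_eq_empty_iff.mp <| hdisj.eq_bot_of_le (hU.trans hLV)

end ContinuousMap

open ContinuousMap in
theorem stmt_15_general {X : Type*} [TopologicalSpace X]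
    (L : Set C(X, ℝ))
    (hconn : IsConnected {x : X | ∃ f ∈ L, f x ≠ 0})
    -- `B` is a projection band in `L`:
    (B : Set C(X, ℝ)) (hBL : B ⊆ L) (hB0 : (0 : C(X, ℝ)) ∈ B)
    (hBproj : ∀ f ∈ L, ∃ g ∈ B, ∃ h ∈ L, (∀ b ∈ B, |b| ⊓ |h| = 0) ∧ f = g + h) :
    B = {0} ∨ B = L := by
  have hproj : ∀ f ∈ L, ∃ g ∈ B, ∃ h ∈ disjointCompl L B, f = g + h := by
    intro f hf
    obtain ⟨g, hg, h, hhL, hhB, rfl⟩ := hBproj f hf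
    exact ⟨g, hg, h, ⟨hhL, hhB⟩, rfl⟩
  rw [← supportUnion_eq_setOf] at hconn
  rcases eq_zero_or_disjointCompl_eq_zero hBL hconn.isPreconnected hproj with hB | hBd
  · exact .inl <| Set.eq_singleton_iff_unique_mem.mpr ⟨hB0, hB⟩
  · refine .inr <| hBL.antisymm fun f hf => ?_
    obtain ⟨g, hg, h, hh, rfl⟩ := hproj f hf
    rwa [hBd h hh, add_zero]

/-- if `L` is a vector sublattice of `C(X)` for a Hausdorff space `X`
and the open set `O_L = ⋃_{f ∈ L} {x : f x ≠ 0}` is connected, then the only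
projection bands in `L` are `{0}` and `L`. -/
theorem stmt_15 {X : Type*} [TopologicalSpace X] [T2Space X]
    (L : Set C(X, ℝ))
    (hL0 : (0 : C(X, ℝ)) ∈ L)
    (hLadd : ∀ f ∈ L, ∀ g ∈ L, f + g ∈ L)
    (hLsmul : ∀ (c : ℝ), ∀ f ∈ L, c • f ∈ L)
    (hLsup : ∀ f ∈ L, ∀ g ∈ L, f ⊔ g ∈ L)
    (hLinf : ∀ f ∈ L, ∀ g ∈ L, f ⊓ g ∈ L)
    (hconn : IsConnected {x : X | ∃ f ∈ L, f x ≠ 0})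
    -- `B` is a projection band in `L`:
    (B : Set C(X, ℝ)) (hBL : B ⊆ L) (hB0 : (0 : C(X, ℝ)) ∈ B)
    (hBadd : ∀ f ∈ B, ∀ g ∈ B, f + g ∈ B)
    (hBsmul : ∀ (c : ℝ), ∀ f ∈ B, c • f ∈ B)
    (hBsolid : ∀ f ∈ B, ∀ g ∈ L, |g| ≤ |f| → g ∈ B)
    (hBproj : ∀ f ∈ L, ∃ g ∈ B, ∃ h ∈ L, (∀ b ∈ B, |b| ⊓ |h| = 0) ∧ f = g + h) :
    B = {0} ∨ B = L :=
  stmt_15_general L hconn B hBL hB0 hBproj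
end

section
/- Let $X$ be a Banach lattice, $J$ a closed ideal in $X$, and $Q : X \to X/J$ the quotient map. If $(y_k)_{k=1}^{\infty}$ is a disjoint sequence in $X/J$ (i.e., $|y_j| \wedge |y_k| = 0$ for $j \neq k$), then there exists a disjoint sequence $(x_k)_{k=1}^{\infty}$ in $X$ with $Q x_k = y_k$ for every $k$. -/
/-!
Rescale the `y k` by positive integers (not reals: the order is not assumed compatible with the
real scalar action) so that `z k := |y k| / m k` is summable, and put `s := ∑ z k`. Disjointness
gives `z k ⊓ (s - z k) = 0`. Lift `s` to `w ≥ 0` and the `z k` to `0 ≤ c k ≤ w`; replacing `c k`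
by `b k := (c k - ∑_{j<k} c j)⁺` does not change the images but makes every partial sum of the
`b k` at most `w`, so the elements `(2 b k - w)⁺` are pairwise disjoint, and they still lift
`(2 z k - s)⁺ = z k`. Multiplying back by `m k` and clamping arbitrary lifts of `y k` between
`±m k • (2 b k - w)⁺` gives the disjoint lifts.
-/

open Finset

section LatticeOrderedGroup

variable {α : Type*} [AddCommGroup α] [Lattice α] [IsOrderedAddMonoid α] {a b c w : α}

lemma inf_add_le_add_inf (ha : 0 ≤ a) (hb : 0 ≤ b) (hc : 0 ≤ c) :
    a ⊓ (b + c) ≤ a ⊓ b + a ⊓ c := by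
  rw [← sub_le_iff_le_add']
  refine le_inf ((sub_le_self _ (le_inf ha hb)).trans inf_le_left) ?_
  rw [sub_inf]
  exact sup_le ((sub_nonpos.mpr inf_le_left).trans hc) (sub_le_iff_le_add'.mpr inf_le_right)

lemma inf_sum_eq_zero {ι : Type*} {s : Finset ι} {f : ι → α} (ha : 0 ≤ a)
    (hf : ∀ i ∈ s, 0 ≤ f i) (h : ∀ i ∈ s, a ⊓ f i = 0) : a ⊓ ∑ i ∈ s, f i = 0 := by
  classical
  induction s using Finset.induction_on with
  | empty => simpa using ha
  | insert i s hi ih =>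
    simp only [mem_insert, forall_eq_or_imp] at hf h
    rw [sum_insert hi]
    refine le_antisymm ?_ (le_inf ha (add_nonneg hf.1 (sum_nonneg hf.2)))
    calc a ⊓ (f i + ∑ j ∈ s, f j) ≤ a ⊓ f i + a ⊓ ∑ j ∈ s, f j :=
          inf_add_le_add_inf ha hf.1 (sum_nonneg hf.2)
      _ = 0 := by rw [h.1, ih hf.2 h.2, add_zero]

lemma inf_nsmul_eq_zero (ha : 0 ≤ a) (hb : 0 ≤ b) (h : a ⊓ b = 0) (n : ℕ) : a ⊓ n • b = 0 := by
  simpa using inf_sum_eq_zero (s := range n) ha (fun _ _ => hb) (fun _ _ => h)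

lemma nsmul_inf_nsmul_eq_zero (ha : 0 ≤ a) (hb : 0 ≤ b) (h : a ⊓ b = 0) (m n : ℕ) :
    m • a ⊓ n • b = 0 := by
  refine inf_nsmul_eq_zero (nsmul_nonneg ha m) hb ?_ n
  rw [inf_comm]
  exact inf_nsmul_eq_zero hb ha (by rwa [inf_comm]) m

lemma nonneg_of_nsmul_nonneg {n : ℕ} (hn : n ≠ 0) (h : 0 ≤ n • a) : 0 ≤ a := by
  have hle : a⁻ ≤ n • a⁺ := calc
    a⁻ ≤ n • a⁻ := le_self_nsmul (negPart_nonneg a) hn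
    _ ≤ n • a⁺ := by rwa [← sub_nonneg, ← nsmul_sub, posPart_sub_negPart]
  have hdisj : a⁻ ⊓ n • a⁺ = 0 :=
    inf_nsmul_eq_zero (negPart_nonneg a) (posPart_nonneg a)
      (by rw [inf_comm]; exact posPart_inf_negPart_eq_zero a) n
  rw [inf_eq_left.mpr hle] at hdisj
  exact negPart_eq_zero.mp hdisj

lemma posPart_sub_eq_sub_inf (a b : α) : (a - b)⁺ = a - a ⊓ b := by
  rw [inf_eq_sub_posPart_sub, sub_sub_cancel]

lemma posPart_inf_posPart_eq_zero_of_add_nonpos (h : a + b ≤ 0) : a⁺ ⊓ b⁺ = 0 := by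
  refine le_antisymm ?_ (le_inf (posPart_nonneg a) (posPart_nonneg b))
  calc a⁺ ⊓ b⁺ ≤ a⁺ ⊓ (-a)⁺ :=
        inf_le_inf_left _ (posPart_mono (le_neg_iff_add_nonpos_left.mpr h))
    _ = 0 := by rw [posPart_neg, posPart_inf_negPart_eq_zero]

lemma posPart_double_sub_inf_eq_zero (h : a + b ≤ w) :
    (a + a - w)⁺ ⊓ (b + b - w)⁺ = 0 := by
  refine posPart_inf_posPart_eq_zero_of_add_nonpos ?_
  have hab : a + b - w ≤ 0 := sub_nonpos.mpr h
  calc a + a - w + (b + b - w) = (a + b - w) + (a + b - w) := by abel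
    _ ≤ 0 := add_nonpos hab hab

end LatticeOrderedGroup

section PartialExcess

variable {α : Type*} [AddCommGroup α] [Lattice α]

def partialExcess (c : ℕ → α) (k : ℕ) : α := (c k - ∑ j ∈ range k, c j)⁺

variable [IsOrderedAddMonoid α] {c : ℕ → α} {w : α}

lemma partialExcess_le (hc : ∀ k, 0 ≤ c k) (k : ℕ) : partialExcess c k ≤ c k :=
  (posPart_mono (sub_le_self _ (sum_nonneg fun j _ => hc j))).trans_eq
    (posPart_eq_self.mpr (hc k))

lemma sum_range_partialExcess_le (hw : 0 ≤ w) (hc : ∀ k, 0 ≤ c k) (hcw : ∀ k, c k ≤ w) (n : ℕ) :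
    ∑ j ∈ range n, partialExcess c j ≤ w := by
  induction n with
  | zero => simpa using hw
  | succ n ih =>
    have hsum : ∑ j ∈ range n, partialExcess c j ≤ ∑ j ∈ range n, c j :=
      sum_le_sum fun j _ => partialExcess_le hc j
    rw [sum_range_succ, partialExcess, posPart_def, add_sup, add_zero]
    refine sup_le ?_ ih
    calc ∑ j ∈ range n, partialExcess c j + (c n - ∑ j ∈ range n, c j)
        ≤ ∑ j ∈ range n, c j + (c n - ∑ j ∈ range n, c j) := add_le_add_left hsum _
      _ = c n := add_sub_cancel _ _
      _ ≤ w := hcw n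

lemma partialExcess_add_le (hw : 0 ≤ w) (hc : ∀ k, 0 ≤ c k) (hcw : ∀ k, c k ≤ w) {j k : ℕ}
    (hjk : j ≠ k) : partialExcess c j + partialExcess c k ≤ w := by
  have hsub : ({j, k} : Finset ℕ) ⊆ range (max j k + 1) := by
    intro i hi
    simp only [mem_insert, mem_singleton] at hi
    simp only [mem_range]
    omega
  calc partialExcess c j + partialExcess c k = ∑ i ∈ {j, k}, partialExcess c i :=
        (sum_pair hjk).symm
    _ ≤ ∑ i ∈ range (max j k + 1), partialExcess c i :=
        sum_le_sum_of_subset_of_nonneg hsub fun i _ _ => posPart_nonneg _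
    _ ≤ w := sum_range_partialExcess_le hw hc hcw _

end PartialExcess

section LatticeHom

variable {α β F : Type*} [AddCommGroup α] [Lattice α] [AddCommGroup β] [Lattice β]
  [FunLike F α β] [AddMonoidHomClass F α β] {f : F}

lemma map_inf_of_map_sup [IsOrderedAddMonoid α] [IsOrderedAddMonoid β]
    (hf : ∀ a b, f (a ⊔ b) = f a ⊔ f b) (a b : α) : f (a ⊓ b) = f a ⊓ f b := by
  rw [← neg_neg (a ⊓ b), neg_inf, map_neg, hf, map_neg, map_neg, ← neg_inf, neg_neg]

lemma map_posPart_of_map_sup (hf : ∀ a b, f (a ⊔ b) = f a ⊔ f b) (a : α) : f a⁺ = (f a)⁺ := by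
  rw [posPart_def, posPart_def, hf, map_zero]

lemma exists_lift_abs_le [IsOrderedAddMonoid α] [IsOrderedAddMonoid β]
    (hf : ∀ a b, f (a ⊔ b) = f a ⊔ f b) (hsurj : Function.Surjective f)
    {y : β} {V : α} (hV0 : 0 ≤ V) (hV : f V = |y|) : ∃ x, f x = y ∧ |x| ≤ V := by
  obtain ⟨p, rfl⟩ := hsurj y
  refine ⟨(p ⊔ -V) ⊓ V, ?_,
    abs_le'.mpr ⟨inf_le_right, neg_le.mpr (le_inf le_sup_right (neg_le_self hV0))⟩⟩
  rw [map_inf_of_map_sup hf, hf, map_neg, hV, sup_eq_left.mpr (neg_le.mpr (neg_le_abs _)),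
    inf_eq_left.mpr (le_abs_self _)]

lemma map_partialExcess [IsOrderedAddMonoid α] [IsOrderedAddMonoid β]
    (hf : ∀ a b, f (a ⊔ b) = f a ⊔ f b) {c : ℕ → α} (hc : ∀ k, 0 ≤ f (c k)) {k : ℕ}
    (hdisj : ∀ j < k, f (c k) ⊓ f (c j) = 0) : f (partialExcess c k) = f (c k) := by
  have h : f (c k) ⊓ ∑ j ∈ range k, f (c j) = 0 :=
    inf_sum_eq_zero (hc k) (fun j _ => hc j) fun j hj => hdisj j (mem_range.mp hj)
  rw [partialExcess, map_posPart_of_map_sup hf, map_sub, map_sum, posPart_sub_eq_sub_inf, h,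
    sub_zero]

lemma exists_pairwise_disjoint_lift [IsOrderedAddMonoid α] [IsOrderedAddMonoid β]
    (hf : ∀ a b, f (a ⊔ b) = f a ⊔ f b) (hsurj : Function.Surjective f) {z : ℕ → β} {s : β}
    (hz : ∀ k, 0 ≤ z k) (hdisj : ∀ j k, j ≠ k → z j ⊓ z k = 0)
    (hs : ∀ k, z k ⊓ (s - z k) = 0) :
    ∃ v : ℕ → α, (∀ k, 0 ≤ v k) ∧ (∀ j k, j ≠ k → v j ⊓ v k = 0) ∧ ∀ k, f (v k) = z k := by
  have hzs : ∀ k, z k ≤ s := fun k => sub_nonneg.mp ((hs k).symm.trans_le inf_le_right)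
  obtain ⟨w₀, hw₀⟩ := hsurj s
  set w := w₀⁺
  have hfw : f w = s := by
    rw [map_posPart_of_map_sup hf, hw₀, posPart_eq_self.mpr ((hz 0).trans (hzs 0))]
  choose p hp using fun k => hsurj (z k)
  set c : ℕ → α := fun k => (p k)⁺ ⊓ w
  have hfc : ∀ k, f (c k) = z k := fun k => by
    rw [map_inf_of_map_sup hf, map_posPart_of_map_sup hf, hfw, hp, posPart_eq_self.mpr (hz k),
      inf_eq_left.mpr (hzs k)]
  have hfb : ∀ k, f (partialExcess c k) = z k := fun k => by
    refine (map_partialExcess hf (fun j => (hfc j).symm ▸ hz j) fun j hjk => ?_).trans (hfc k)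
    rw [hfc, hfc]
    exact hdisj k j hjk.ne'
  have hbw : ∀ j k, j ≠ k → partialExcess c j + partialExcess c k ≤ w := fun j k =>
    partialExcess_add_le (posPart_nonneg _)
      (fun k => le_inf (posPart_nonneg _) (posPart_nonneg _)) (fun k => inf_le_right)
  refine ⟨fun k => (partialExcess c k + partialExcess c k - w)⁺, fun k => posPart_nonneg _,
    fun j k hjk => posPart_double_sub_inf_eq_zero (hbw j k hjk), fun k => ?_⟩
  rw [map_posPart_of_map_sup hf, map_sub, map_add, hfb, hfw,
    show z k + z k - s = z k - (s - z k) by abel, posPart_sub_eq_sub_inf, hs, sub_zero]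

end LatticeHom

lemma inf_sub_eq_zero_of_hasSum {α ι : Type*}
    [AddCommGroup α] [Lattice α] [IsOrderedAddMonoid α] [TopologicalSpace α]
    [IsTopologicalAddGroup α] [ContinuousInf α] [T1Space α]
    {z : ι → α} {s : α} (hz : ∀ i, 0 ≤ z i) (hdisj : ∀ i j, i ≠ j → z i ⊓ z j = 0)
    (hs : HasSum z s) (i : ι) : z i ⊓ (s - z i) = 0 := by
  classical
  have hclosed : IsClosed {t : α | z i ⊓ t = 0} :=
    isClosed_singleton.preimage (continuous_const.inf continuous_id)
  refine hclosed.mem_of_tendsto (hasSum_ite_sub_hasSum hs i) (.of_forall fun F => ?_)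
  refine inf_sum_eq_zero (hz i) (fun j _ => ?_) fun j _ => ?_ <;> by_cases hj : j = i
  · simp [hj]
  · simp [hj, hz j]
  · simp [hj, hz i]
  · simp [hj, hdisj i j (Ne.symm hj)]

lemma exists_summable_inv_natCast_smul {E : Type*} [NormedAddCommGroup E] [NormedSpace ℝ E]
    [CompleteSpace E] (y : ℕ → E) :
    ∃ m : ℕ → ℕ, (∀ k, m k ≠ 0) ∧ Summable fun k => (m k : ℝ)⁻¹ • y k := by
  refine ⟨fun k => ⌈2 ^ k * ‖y k‖⌉₊ + 1, fun k => Nat.succ_ne_zero _, ?_⟩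
  refine Summable.of_norm_bounded summable_geometric_two fun k => ?_
  have hm : 2 ^ k * ‖y k‖ ≤ ((⌈2 ^ k * ‖y k‖⌉₊ + 1 : ℕ) : ℝ) := by
    push_cast
    linarith [Nat.le_ceil (2 ^ k * ‖y k‖)]
  rw [norm_smul, norm_inv, Real.norm_natCast, inv_mul_le_iff₀ (by positivity), one_div, inv_pow,
    ← div_eq_mul_inv, le_div_iff₀ (by positivity), mul_comm]
  exact hm

theorem stmt_16_general {X Y : Type*}
    [NormedAddCommGroup X] [Lattice X] [IsOrderedAddMonoid X] [NormedSpace ℝ X]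
    [NormedAddCommGroup Y] [Lattice Y] [HasSolidNorm Y] [IsOrderedAddMonoid Y] [NormedSpace ℝ Y] [CompleteSpace Y]
    (Q : X →ₗ[ℝ] Y) (hQlat : ∀ x y, Q (x ⊔ y) = Q x ⊔ Q y)
    (hQsurj : Function.Surjective Q)
    (y : ℕ → Y) (hdisj : ∀ j k, j ≠ k → |y j| ⊓ |y k| = 0) :
    ∃ x : ℕ → X, (∀ j k, j ≠ k → |x j| ⊓ |x k| = 0) ∧ ∀ k, Q (x k) = y k := by
  obtain ⟨m, hm, hsum⟩ := exists_summable_inv_natCast_smul fun k => |y k|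
  set z : ℕ → Y := fun k => (m k : ℝ)⁻¹ • |y k|
  have hmz : ∀ k, m k • z k = |y k| := fun k => by
    rw [← Nat.cast_smul_eq_nsmul ℝ, smul_smul, mul_inv_cancel₀ (Nat.cast_ne_zero.mpr (hm k)),
      one_smul]
  have hz : ∀ k, 0 ≤ z k := fun k =>
    nonneg_of_nsmul_nonneg (hm k) ((hmz k).symm ▸ abs_nonneg _)
  have hzdisj : ∀ j k, j ≠ k → z j ⊓ z k = 0 := fun j k hjk => by
    refine le_antisymm ?_ (le_inf (hz j) (hz k))
    calc z j ⊓ z k ≤ m j • z j ⊓ m k • z k :=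
          inf_le_inf (le_self_nsmul (hz j) (hm j)) (le_self_nsmul (hz k) (hm k))
      _ = 0 := by rw [hmz, hmz, hdisj j k hjk]
  obtain ⟨v, hv, hvdisj, hQv⟩ := exists_pairwise_disjoint_lift hQlat hQsurj hz hzdisj
    (inf_sub_eq_zero_of_hasSum hz hzdisj hsum.hasSum)
  choose x hQx hxv using fun k => exists_lift_abs_le hQlat hQsurj (nsmul_nonneg (hv k) (m k))
    (by rw [map_nsmul, hQv, hmz])
  refine ⟨x, fun j k hjk => le_antisymm ?_ (le_inf (abs_nonneg _) (abs_nonneg _)), hQx⟩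
  calc |x j| ⊓ |x k| ≤ m j • v j ⊓ m k • v k := inf_le_inf (hxv j) (hxv k)
    _ = 0 := nsmul_inf_nsmul_eq_zero (hv j) (hv k) (hvdisj j k hjk) _ _

/-- disjoint sequences in a quotient of a Banach lattice by a closed
ideal lift to disjoint sequences.  The quotient map is formalized as a surjective
lattice homomorphism `Q` with closed kernel realizing the quotient norm
(every `y` lifts with norm at most `‖y‖ + ε`). -/
theorem stmt_16 {X Y : Type*}
    [NormedAddCommGroup X] [Lattice X] [HasSolidNorm X] [IsOrderedAddMonoid X] [NormedSpace ℝ X] [CompleteSpace X]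
    [NormedAddCommGroup Y] [Lattice Y] [HasSolidNorm Y] [IsOrderedAddMonoid Y] [NormedSpace ℝ Y] [CompleteSpace Y]
    (Q : X →ₗ[ℝ] Y) (hQlat : ∀ x y, Q (x ⊔ y) = Q x ⊔ Q y)
    (hQsurj : Function.Surjective Q)
    (hker : IsClosed {x : X | Q x = 0})
    (hQnorm : ∀ (y : Y) (ε : ℝ), 0 < ε → ∃ x, Q x = y ∧ ‖x‖ ≤ ‖y‖ + ε)
    (y : ℕ → Y) (hdisj : ∀ j k, j ≠ k → |y j| ⊓ |y k| = 0) :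
    ∃ x : ℕ → X, (∀ j k, j ≠ k → |x j| ⊓ |x k| = 0) ∧ ∀ k, Q (x k) = y k :=
  stmt_16_general Q hQlat hQsurj y hdisj
end

section
/- Let $X$ be a vector lattice and $J$ an ideal in $X$ with quotient map $Q : X \to X/J$. For any finite disjoint family $(y_k)_{k=1}^{n}$ in $X/J$ there is a disjoint family $(x_k)_{k=1}^{n}$ in $X$ with $Q x_k = y_k$ for $1 \le k \le n$. -/
/-!
Lift the moduli `|y k|` first: take nonnegative lifts `v k` and subtract from each the sum
`∑_{j ≠ k} v k ⊓ v j`, which lies in the kernel of `Q`; the positive parts `a k` of the differences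
are disjoint, since `a k ≤ (v k - v j)⁺` and `a j ≤ (v j - v k)⁺`. Then clamp an arbitrary lift
`u k` of `y k` into the order interval `[-a k, a k]`: the result is dominated in modulus by `a k`,
and its image is `y k` clamped into `[-|y k|, |y k|]`, that is `y k` itself.
-/

section LatticeHom

variable {X Z : Type*} [AddCommGroup X] [Lattice X] [AddCommGroup Z] [Lattice Z]

theorem AddMonoidHom.map_posPart_of_map_sup (Q : X →+ Z) (hQ : ∀ a b, Q (a ⊔ b) = Q a ⊔ Q b)
    (a : X) : Q a⁺ = (Q a)⁺ := by
  rw [posPart_def, posPart_def, hQ, map_zero]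

theorem exists_nonneg_lift_of_map_sup {Q : X →+ Z} (hQ : ∀ a b, Q (a ⊔ b) = Q a ⊔ Q b)
    (hQsurj : Function.Surjective Q) {y : Z} (hy : 0 ≤ y) : ∃ v, 0 ≤ v ∧ Q v = y := by
  obtain ⟨u, rfl⟩ := hQsurj y
  exact ⟨u⁺, posPart_nonneg u, by rw [Q.map_posPart_of_map_sup hQ, posPart_eq_self.2 hy]⟩

variable [CovariantClass X X (· + ·) (· ≤ ·)] [CovariantClass Z Z (· + ·) (· ≤ ·)]

theorem AddMonoidHom.map_inf_of_map_sup (Q : X →+ Z) (hQ : ∀ a b, Q (a ⊔ b) = Q a ⊔ Q b)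
    (a b : X) : Q (a ⊓ b) = Q a ⊓ Q b := by
  have h : Q (a ⊓ b) + (Q a ⊔ Q b) = Q a ⊓ Q b + (Q a ⊔ Q b) := by
    rw [inf_add_sup, ← hQ, ← map_add, inf_add_sup, map_add]
  exact add_right_cancel h

theorem posPart_sub_inf_posPart_sub_eq_zero (a b : X) : (a - b)⁺ ⊓ (b - a)⁺ = 0 := by
  rw [← neg_sub a b, posPart_neg, posPart_inf_negPart_eq_zero]

theorem abs_clamp_le {a : X} (ha : 0 ≤ a) (u : X) : |u ⊓ a ⊔ -a| ≤ a :=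
  abs_le'.2 ⟨sup_le inf_le_right (neg_le_self ha), neg_le.2 le_sup_right⟩

theorem clamp_abs_eq_self (y : X) : y ⊓ |y| ⊔ -|y| = y := by
  rw [inf_eq_left.2 (le_abs_self y), sup_eq_left.2 (neg_le.1 (neg_le_abs y))]

variable (Q : X →+ Z) (hQ : ∀ a b, Q (a ⊔ b) = Q a ⊔ Q b) (hQsurj : Function.Surjective Q)
include hQ hQsurj

theorem exists_disjoint_nonneg_lift {ι : Type*} [Fintype ι] (y : ι → Z)
    (hy : ∀ k, 0 ≤ y k) (hdisj : ∀ j k, j ≠ k → y j ⊓ y k = 0) :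
    ∃ a : ι → X, (∀ k, 0 ≤ a k) ∧ (∀ j k, j ≠ k → a j ⊓ a k = 0) ∧ ∀ k, Q (a k) = y k := by
  classical
  choose v hv0 hQv using fun k => exists_nonneg_lift_of_map_sup hQ hQsurj (hy k)
  set s : ι → X := fun k => ∑ j ∈ Finset.univ.erase k, v k ⊓ v j
  have hQs : ∀ k, Q (s k) = 0 := fun k => by
    refine (map_sum Q _ _).trans (Finset.sum_eq_zero fun j hj => ?_)
    rw [Q.map_inf_of_map_sup hQ, hQv, hQv, hdisj k j (Finset.ne_of_mem_erase hj).symm]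
  have hle : ∀ j k, j ≠ k → (v k - s k)⁺ ≤ (v k - v j)⁺ := fun j k hjk => by
    have hinf : v k ⊓ v j ≤ s k :=
      Finset.single_le_sum (fun i _ => le_inf (hv0 k) (hv0 i))
        (Finset.mem_erase.2 ⟨hjk, Finset.mem_univ j⟩)
    calc (v k - s k)⁺ ≤ (v k - v k ⊓ v j)⁺ := posPart_mono (sub_le_sub_left hinf _)
      _ = (v k - v j)⁺ := by
        rw [sub_inf, sub_self, posPart_eq_self.2 le_sup_left, sup_comm, posPart_def]
  refine ⟨fun k => (v k - s k)⁺, fun k => posPart_nonneg _, fun j k hjk => ?_, fun k => ?_⟩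
  · refine le_antisymm ?_ (le_inf (posPart_nonneg _) (posPart_nonneg _))
    exact (inf_le_inf (hle k j hjk.symm) (hle j k hjk)).trans_eq
      (posPart_sub_inf_posPart_sub_eq_zero _ _)
  · rw [Q.map_posPart_of_map_sup hQ, map_sub, hQs, sub_zero, hQv, posPart_eq_self.2 (hy k)]

theorem exists_disjoint_lift {ι : Type*} [Fintype ι] (y : ι → Z)
    (hdisj : ∀ j k, j ≠ k → |y j| ⊓ |y k| = 0) :
    ∃ x : ι → X, (∀ j k, j ≠ k → |x j| ⊓ |x k| = 0) ∧ ∀ k, Q (x k) = y k := by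
  obtain ⟨a, ha0, hadisj, hQa⟩ :=
    exists_disjoint_nonneg_lift Q hQ hQsurj (fun k => |y k|) (fun k => abs_nonneg _) hdisj
  choose u hu using fun k => hQsurj (y k)
  refine ⟨fun k => u k ⊓ a k ⊔ -a k, fun j k hjk => ?_, fun k => ?_⟩
  · refine le_antisymm ?_ (le_inf (abs_nonneg _) (abs_nonneg _))
    exact (inf_le_inf (abs_clamp_le (ha0 j) _) (abs_clamp_le (ha0 k) _)).trans_eq (hadisj j k hjk)
  · rw [hQ, Q.map_inf_of_map_sup hQ, map_neg, hu, hQa, clamp_abs_eq_self]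

end LatticeHom

/-- The quotient map `X → X/J` is modelled as a surjective linear lattice homomorphism
`Q : X → Z`; its kernel is then an ideal and `Z ≅ X / ker Q`. -/
theorem stmt_17 {X Z : Type*}
    [AddCommGroup X] [Lattice X] [Module ℝ X] [CovariantClass X X (· + ·) (· ≤ ·)]
    [AddCommGroup Z] [Lattice Z] [Module ℝ Z] [CovariantClass Z Z (· + ·) (· ≤ ·)]
    (Q : X →ₗ[ℝ] Z) (hQlat : ∀ x y, Q (x ⊔ y) = Q x ⊔ Q y)
    (hQsurj : Function.Surjective Q)
    (n : ℕ) (y : Fin n → Z) (hdisj : ∀ j k, j ≠ k → |y j| ⊓ |y k| = 0) :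
    ∃ x : Fin n → X, (∀ j k, j ≠ k → |x j| ⊓ |x k| = 0) ∧ ∀ k, Q (x k) = y k :=
  exists_disjoint_lift Q.toAddMonoidHom hQlat hQsurj y hdisj
end

section
/- Every free Banach lattice is projective: if $F = FBL(A)$ with free generators $(\delta_a)_{a \in A}$, $X$ is a Banach lattice, $J$ a closed ideal of $X$ with quotient map $Q : X \to X/J$, $T : F \to X/J$ a bounded lattice homomorphism and $\epsilon > 0$, then there is a bounded lattice homomorphism $\hat{T} : F \to X$ with $Q \circ \hat{T} = T$ and $\|\hat{T}\| \le (1+\epsilon)\|T\|$. -/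
/-!
Lift each `T (δ a)` through `Q` to some `x a` with `‖x a‖ ≤ (1 + ε) ‖T (δ a)‖ ≤ (1 + ε) ‖T‖` and
extend `x` to `T̂` by freeness. Then `Q ∘ T̂` and `T` are lattice homomorphisms agreeing on the
generators, hence equal.
-/

universe u v w

/-- `(F, ι)` is a free Banach lattice over `A`. -/
def IsFreeBanachLattice (A : Type u) (X : Type v)
    [NormedAddCommGroup X] [Lattice X] [HasSolidNorm X] [IsOrderedAddMonoid X] [NormedSpace ℝ X] [CompleteSpace X]
    (ι : A → X) : Prop :=
  Bornology.IsBounded (Set.range ι) ∧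
  ∀ (Y : Type w) [NormedAddCommGroup Y] [Lattice Y] [HasSolidNorm Y] [IsOrderedAddMonoid Y] [NormedSpace ℝ Y] [CompleteSpace Y]
    (κ : A → Y), Bornology.IsBounded (Set.range κ) →
    ∃! T : X →L[ℝ] Y, (∀ x y, T (x ⊔ y) = T x ⊔ T y) ∧ (∀ a, T (ι a) = κ a) ∧
      ‖T‖ = ⨆ a, ‖κ a‖

instance {α : Type*} [NormedAddCommGroup α] [Lattice α] [HasSolidNorm α] :
    HasSolidNorm (ULift α) :=
  ⟨fun _ _ h => HasSolidNorm.solid (α := α) h⟩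

instance {α : Type*} [AddCommGroup α] [Lattice α] [IsOrderedAddMonoid α] :
    IsOrderedAddMonoid (ULift α) where
  add_le_add_left _ _ h c := add_le_add_left (α := α) h c.down
  add_le_add_right _ _ h c := add_le_add_right (α := α) h c.down

instance {α β : Type*} [NormedAddCommGroup α] [Lattice α] [HasSolidNorm α]
    [NormedAddCommGroup β] [Lattice β] [HasSolidNorm β] : HasSolidNorm (α × β) where
  solid _ _ h := max_le_max (HasSolidNorm.solid h.1) (HasSolidNorm.solid h.2)

namespace IsFreeBanachLattice

variable {A : Type u} {F : Type v}
  [NormedAddCommGroup F] [Lattice F] [HasSolidNorm F] [IsOrderedAddMonoid F] [NormedSpace ℝ F]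
  [CompleteSpace F] {δ : A → F}

theorem isBounded_range_comp (hF : IsFreeBanachLattice.{u, v, w} A F δ) {E : Type*}
    [SeminormedAddCommGroup E] [NormedSpace ℝ E] (S : F →L[ℝ] E) :
    Bornology.IsBounded (Set.range (S ∘ δ)) := by
  rw [Set.range_comp]
  exact S.lipschitz.isBounded_image hF.1

variable {W : Type w} [NormedAddCommGroup W] [Lattice W] [HasSolidNorm W] [IsOrderedAddMonoid W]
  [NormedSpace ℝ W] [CompleteSpace W]

/-- The universal property only asserts uniqueness among extensions of the extremal norm
`⨆ a, ‖κ a‖`; pairing each `Sᵢ` with the extension `ψ` of a large enough constant family forces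
that norm. -/
theorem ext [Nonempty A] (hF : IsFreeBanachLattice.{u, v, w} A F δ) {S₁ S₂ : F →L[ℝ] W}
    (h₁ : ∀ x y, S₁ (x ⊔ y) = S₁ x ⊔ S₁ y) (h₂ : ∀ x y, S₂ (x ⊔ y) = S₂ x ⊔ S₂ y)
    (h : ∀ a, S₁ (δ a) = S₂ (δ a)) : S₁ = S₂ := by
  obtain ⟨C, hC⟩ := isBounded_iff_forall_norm_le.mp (hF.isBounded_range_comp S₁)
  set c : ℝ := max (max ‖S₁‖ ‖S₂‖) C
  have hc : 0 ≤ c := (norm_nonneg _).trans ((le_max_left _ _).trans (le_max_left _ _))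
  have norm_c : ‖(ULift.up c : ULift.{w} ℝ)‖ = c := by
    rw [ULift.norm_up, Real.norm_of_nonneg hc]
  obtain ⟨ψ, ⟨hψ, hψδ, hψc⟩, -⟩ := hF.2 (ULift.{w} ℝ) (fun _ => ULift.up c)
    (isBounded_iff_forall_norm_le.mpr ⟨c, by rintro _ ⟨a, rfl⟩; exact norm_c.le⟩)
  rw [norm_c, ciSup_const] at hψc
  set κ : A → W × ULift.{w} ℝ := fun a => (S₁ (δ a), ULift.up c)
  have hκ : ∀ a, ‖κ a‖ = c := fun a => by
    have : ‖S₁ (δ a)‖ ≤ C := hC _ ⟨a, rfl⟩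
    rw [Prod.norm_mk, norm_c, max_eq_right (this.trans (le_max_right _ _))]
  obtain ⟨R, -, huniq⟩ := hF.2 _ κ
    (isBounded_iff_forall_norm_le.mpr ⟨c, by rintro _ ⟨a, rfl⟩; exact (hκ a).le⟩)
  have prod_eq : ∀ S : F →L[ℝ] W, (∀ x y, S (x ⊔ y) = S x ⊔ S y) → ‖S‖ ≤ c →
      (∀ a, S (δ a) = S₁ (δ a)) → S.prod ψ = R := by
    intro S hS hSc hSδ
    refine huniq _ ⟨fun x y => ?_, fun a => ?_, ?_⟩
    · simp only [ContinuousLinearMap.prod_apply, hS, hψ, Prod.mk_sup_mk]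
    · simp only [ContinuousLinearMap.prod_apply, hSδ, hψδ, κ]
    · rw [ContinuousLinearMap.opNorm_prod, Prod.norm_mk, hψc, max_eq_right hSc, iSup_congr hκ,
        ciSup_const]
  have h₁c : ‖S₁‖ ≤ c := (le_max_left _ _).trans (le_max_left _ _)
  have h₂c : ‖S₂‖ ≤ c := (le_max_right _ _).trans (le_max_left _ _)
  have prods_eq : S₁.prod ψ = S₂.prod ψ :=
    (prod_eq S₁ h₁ h₁c fun _ => rfl).trans (prod_eq S₂ h₂ h₂c fun a => (h a).symm).symm
  ext x
  exact congrArg Prod.fst (DFunLike.congr_fun prods_eq x)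

theorem norm_eq_iSup [Nonempty A] (hF : IsFreeBanachLattice.{u, v, w} A F δ) {S : F →L[ℝ] W}
    (hS : ∀ x y, S (x ⊔ y) = S x ⊔ S y) : ‖S‖ = ⨆ a, ‖S (δ a)‖ := by
  obtain ⟨R, ⟨hR, hRδ, hRnorm⟩, -⟩ := hF.2 W (S ∘ δ) (hF.isBounded_range_comp S)
  exact (congrArg norm (hF.ext hS hR fun a => (hRδ a).symm)).trans hRnorm

theorem norm_apply_le [Nonempty A] (hF : IsFreeBanachLattice.{u, v, w} A F δ) {S : F →L[ℝ] W}
    (hS : ∀ x y, S (x ⊔ y) = S x ⊔ S y) (a : A) : ‖S (δ a)‖ ≤ ‖S‖ := by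
  obtain ⟨C, hC⟩ := isBounded_iff_forall_norm_le.mp (hF.isBounded_range_comp S)
  rw [hF.norm_eq_iSup hS]
  exact le_ciSup ⟨C, by rintro _ ⟨b, rfl⟩; exact hC _ ⟨b, rfl⟩⟩ a

theorem exists_extension_of_norm_le [Nonempty A] (hF : IsFreeBanachLattice.{u, v, w} A F δ)
    (κ : A → W) {C : ℝ} (hκ : ∀ a, ‖κ a‖ ≤ C) :
    ∃ S : F →L[ℝ] W, (∀ x y, S (x ⊔ y) = S x ⊔ S y) ∧ (∀ a, S (δ a) = κ a) ∧ ‖S‖ ≤ C := by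
  obtain ⟨S, ⟨hS, hSδ, hSnorm⟩, -⟩ := hF.2 W κ
    (isBounded_iff_forall_norm_le.mpr ⟨C, by rintro _ ⟨a, rfl⟩; exact hκ a⟩)
  exact ⟨S, hS, hSδ, hSnorm ▸ ciSup_le hκ⟩

end IsFreeBanachLattice

theorem stmt_18_general {A : Type u} [Nonempty A] {F : Type v}
    [NormedAddCommGroup F] [Lattice F] [HasSolidNorm F] [IsOrderedAddMonoid F] [NormedSpace ℝ F] [CompleteSpace F]
    (δ : A → F) (hF : IsFreeBanachLattice.{u, v, w} A F δ)
    {X Z : Type w}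
    [NormedAddCommGroup X] [Lattice X] [HasSolidNorm X] [IsOrderedAddMonoid X] [NormedSpace ℝ X] [CompleteSpace X]
    [NormedAddCommGroup Z] [Lattice Z] [HasSolidNorm Z] [IsOrderedAddMonoid Z] [NormedSpace ℝ Z] [CompleteSpace Z]
    (Q : X →L[ℝ] Z) (hQlat : ∀ x y, Q (x ⊔ y) = Q x ⊔ Q y)
    (hQnorm : ∀ (z : Z) (η : ℝ), 0 < η → ∃ x, Q x = z ∧ ‖x‖ ≤ (1 + η) * ‖z‖)
    (T : F →L[ℝ] Z) (hTlat : ∀ x y, T (x ⊔ y) = T x ⊔ T y)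
    (ε : ℝ) (hε : 0 < ε) :
    ∃ That : F →L[ℝ] X, (∀ x y, That (x ⊔ y) = That x ⊔ That y) ∧
      Q.comp That = T ∧ ‖That‖ ≤ (1 + ε) * ‖T‖ := by
  choose x hxQ hxnorm using fun a => hQnorm (T (δ a)) ε hε
  have hx : ∀ a, ‖x a‖ ≤ (1 + ε) * ‖T‖ := fun a =>
    (hxnorm a).trans (by gcongr; exact hF.norm_apply_le hTlat a)
  obtain ⟨That, hThat, hThatδ, hThatnorm⟩ := hF.exists_extension_of_norm_le x hx
  refine ⟨That, hThat, hF.ext (fun u v => ?_) hTlat fun a => ?_, hThatnorm⟩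
  · simp only [ContinuousLinearMap.comp_apply, hThat, hQlat]
  · simp only [ContinuousLinearMap.comp_apply, hThatδ, hxQ]

/-- free Banach lattices are projective.  Quotients are formalized by
surjective lattice homomorphisms `Q` with closed kernel satisfying the quotient
norm lifting property.  Any lattice homomorphism `T` from the free Banach lattice
into the quotient lifts to `T̂` with `Q ∘ T̂ = T` and `‖T̂‖ ≤ (1+ε)‖T‖`. -/
theorem stmt_18 {A : Type u} [Nonempty A] {F : Type v}
    [NormedAddCommGroup F] [Lattice F] [HasSolidNorm F] [IsOrderedAddMonoid F] [NormedSpace ℝ F] [CompleteSpace F]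
    (δ : A → F) (hF : IsFreeBanachLattice.{u, v, w} A F δ)
    {X Z : Type w}
    [NormedAddCommGroup X] [Lattice X] [HasSolidNorm X] [IsOrderedAddMonoid X] [NormedSpace ℝ X] [CompleteSpace X]
    [NormedAddCommGroup Z] [Lattice Z] [HasSolidNorm Z] [IsOrderedAddMonoid Z] [NormedSpace ℝ Z] [CompleteSpace Z]
    (Q : X →L[ℝ] Z) (hQlat : ∀ x y, Q (x ⊔ y) = Q x ⊔ Q y)
    (hQsurj : Function.Surjective Q)
    (hker : IsClosed {x : X | Q x = 0})
    (hQnorm : ∀ (z : Z) (η : ℝ), 0 < η → ∃ x, Q x = z ∧ ‖x‖ ≤ (1 + η) * ‖z‖)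
    (T : F →L[ℝ] Z) (hTlat : ∀ x y, T (x ⊔ y) = T x ⊔ T y)
    (ε : ℝ) (hε : 0 < ε) :
    ∃ That : F →L[ℝ] X, (∀ x y, That (x ⊔ y) = That x ⊔ That y) ∧
      Q.comp That = T ∧ ‖That‖ ≤ (1 + ε) * ‖T‖ :=
  stmt_18_general δ hF Q hQlat hQnorm T hTlat ε hε
end

section
/- Let $Y$ be a Banach lattice in which every upward directed, norm bounded subset of the positive cone has an upper bound. If $Y$ is embedded as a closed ideal in a Banach lattice $X$, then $Y$ is a projection band in $X$; in particular, for each $x \in X_+$ the set $\{y \in Y : 0 \le y \le x\}$ has a maximum element in $Y$. -/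
/-!
For `x ≥ 0`, the positive part of `Y` below `x` is upward directed (closed under `⊔`) and norm
bounded by `‖x‖`, so it has an upper bound `u ∈ Y`, and `u ⊓ x` is its largest element `m`.
Maximality forces `x - m` to be disjoint from `Y`: otherwise `m + |w| ⊓ (x - m)` would be a larger
element of the same set. Splitting an arbitrary `x` as `x⁺ - x⁻` gives the band decomposition.
-/

open LatticeOrderedAddCommGroup

section LatticeOrderedGroup

variable {X : Type*} [Lattice X] [AddCommGroup X] [AddLeftMono X]

lemma inf_abs_sub_eq_zero {a b c : X} (ha : 0 ≤ a) (hb : 0 ≤ b) (hca : c ⊓ a = 0)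
    (hcb : c ⊓ b = 0) : c ⊓ |a - b| = 0 := by
  let := AddCommGroup.toDistribLattice X
  have hc : 0 ≤ c := hca ▸ inf_le_left
  have habs : |a - b| ≤ a ⊔ b := by
    rw [abs_sub_comm, ← sup_sub_inf_eq_abs_sub]
    exact sub_le_self _ (le_inf ha hb)
  refine le_antisymm ?_ (le_inf hc (abs_nonneg _))
  calc c ⊓ |a - b| ≤ c ⊓ (a ⊔ b) := inf_le_inf_left c habs
    _ = 0 := by rw [inf_sup_left, hca, hcb, sup_idem]

namespace LatticeOrderedAddCommGroup.IsSolid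

variable {Y : AddSubgroup X}

lemma sup_mem (hY : IsSolid (Y : Set X)) {a b : X} (ha : a ∈ Y) (hb : b ∈ Y)
    (ha₀ : 0 ≤ a) (hb₀ : 0 ≤ b) : a ⊔ b ∈ Y :=
  hY (Y.add_mem ha hb) <| by
    rw [abs_of_nonneg (le_sup_of_le_left ha₀), abs_of_nonneg (add_nonneg ha₀ hb₀)]
    exact sup_le (le_add_of_nonneg_right hb₀) (le_add_of_nonneg_left ha₀)

lemma inf_mem (hY : IsSolid (Y : Set X)) {a b : X} (ha : a ∈ Y) (ha₀ : 0 ≤ a)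
    (hb₀ : 0 ≤ b) : a ⊓ b ∈ Y :=
  hY ha <| by rw [abs_of_nonneg (le_inf ha₀ hb₀), abs_of_nonneg ha₀]; exact inf_le_left

lemma directedOn_nonneg_le (hY : IsSolid (Y : Set X)) (x : X) :
    DirectedOn (· ≤ ·) {y | y ∈ Y ∧ 0 ≤ y ∧ y ≤ x} := by
  rintro a ⟨haY, ha₀, hax⟩ b ⟨hbY, hb₀, hbx⟩
  exact ⟨a ⊔ b, ⟨sup_mem hY haY hbY ha₀ hb₀, le_sup_of_le_left ha₀, sup_le hax hbx⟩,
    le_sup_left, le_sup_right⟩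

lemma inf_sub_eq_zero_of_isGreatest (hY : IsSolid (Y : Set X)) {x m : X}
    (hm : IsGreatest {y | y ∈ Y ∧ 0 ≤ y ∧ y ≤ x} m) {w : X} (hw : w ∈ Y) :
    |w| ⊓ (x - m) = 0 := by
  obtain ⟨⟨hmY, hm₀, hmx⟩, hmax⟩ := hm
  set z := |w| ⊓ (x - m)
  have hz₀ : 0 ≤ z := le_inf (abs_nonneg w) (sub_nonneg.2 hmx)
  have hzY : z ∈ Y := hY hw <| by rw [abs_of_nonneg hz₀]; exact inf_le_left
  have hmz : m + z ≤ x := by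
    rw [add_comm, ← le_sub_iff_add_le]
    exact inf_le_right
  have : m + z ≤ m := hmax ⟨Y.add_mem hmY hzY, add_nonneg hm₀ hz₀, hmz⟩
  exact le_antisymm ((add_le_iff_nonpos_right m).1 this) hz₀

end LatticeOrderedAddCommGroup.IsSolid

end LatticeOrderedGroup

section NormedLattice

variable {X : Type*} [NormedAddCommGroup X] [Lattice X] [HasSolidNorm X] [IsOrderedAddMonoid X]

lemma HasSolidNorm.isBounded_Icc (a b : X) : Bornology.IsBounded (Set.Icc a b) := by
  refine isBounded_iff_forall_norm_le.2 ⟨‖|a| ⊔ |b|‖, fun y ⟨hay, hyb⟩ ↦ ?_⟩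
  refine norm_le_norm_of_abs_le_abs ?_
  rw [abs_of_nonneg (le_sup_of_le_left (abs_nonneg a))]
  refine abs_le'.2 ⟨le_sup_of_le_right (hyb.trans (le_abs_self b)), ?_⟩
  exact le_sup_of_le_left ((neg_le_neg hay).trans (neg_le_abs a))

namespace LatticeOrderedAddCommGroup.IsSolid

lemma exists_isGreatest_nonneg_le {Y : AddSubgroup X} (hY : IsSolid (Y : Set X))
    (hYdir : ∀ S : Set X, S ⊆ {y : X | y ∈ Y ∧ 0 ≤ y} → DirectedOn (· ≤ ·) S →
      Bornology.IsBounded S → ∃ u ∈ Y, ∀ s ∈ S, s ≤ u)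
    {x : X} (hx : 0 ≤ x) : ∃ m, IsGreatest {y | y ∈ Y ∧ 0 ≤ y ∧ y ≤ x} m := by
  obtain ⟨u, huY, hu⟩ := hYdir _ (fun y hy ↦ ⟨hy.1, hy.2.1⟩) (directedOn_nonneg_le hY x)
    ((HasSolidNorm.isBounded_Icc 0 x).subset fun y hy ↦ hy.2)
  have hu₀ : 0 ≤ u := hu 0 ⟨Y.zero_mem, le_rfl, hx⟩
  exact ⟨u ⊓ x, ⟨inf_mem hY huY hu₀ hx, le_inf hu₀ hx, inf_le_right⟩,
    fun y hy ↦ le_inf (hu y hy) hy.2.2⟩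

end LatticeOrderedAddCommGroup.IsSolid

end NormedLattice

theorem stmt_19_general {X : Type*} [NormedAddCommGroup X] [Lattice X] [HasSolidNorm X]
    [IsOrderedAddMonoid X] [NormedSpace ℝ X]
    (Y : Submodule ℝ X)
    (hYsolid : ∀ x : X, ∀ y ∈ Y, |x| ≤ |y| → x ∈ Y)
    (hYdir : ∀ S : Set X, S ⊆ {y : X | y ∈ Y ∧ 0 ≤ y} → DirectedOn (· ≤ ·) S →
      Bornology.IsBounded S → ∃ u ∈ Y, ∀ s ∈ S, s ≤ u) :
    (∀ x : X, 0 ≤ x →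
      ∃ m, m ∈ Y ∧ 0 ≤ m ∧ m ≤ x ∧ ∀ y ∈ Y, 0 ≤ y → y ≤ x → y ≤ m) ∧
    (∀ x : X, ∃ u ∈ Y, ∃ v : X, (∀ w ∈ Y, |w| ⊓ |v| = 0) ∧ x = u + v) := by
  have hY : IsSolid (Y.toAddSubgroup : Set X) := fun y hy x hxy ↦ hYsolid x y hy hxy
  have hmax := fun x (hx : 0 ≤ x) ↦ IsSolid.exists_isGreatest_nonneg_le hY hYdir hx
  refine ⟨fun x hx ↦ ?_, fun x ↦ ?_⟩
  · obtain ⟨m, ⟨hmY, hm₀, hmx⟩, hm⟩ := hmax x hx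
    exact ⟨m, hmY, hm₀, hmx, fun y hyY hy₀ hyx ↦ hm ⟨hyY, hy₀, hyx⟩⟩
  obtain ⟨m₁, hm₁⟩ := hmax x⁺ (posPart_nonneg x)
  obtain ⟨m₂, hm₂⟩ := hmax x⁻ (negPart_nonneg x)
  refine ⟨m₁ - m₂, Y.sub_mem hm₁.1.1 hm₂.1.1, (x⁺ - m₁) - (x⁻ - m₂), fun w hw ↦ ?_, ?_⟩
  · exact inf_abs_sub_eq_zero (sub_nonneg.2 hm₁.1.2.2) (sub_nonneg.2 hm₂.1.2.2)
      (IsSolid.inf_sub_eq_zero_of_isGreatest hY hm₁ hw)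
      (IsSolid.inf_sub_eq_zero_of_isGreatest hY hm₂ hw)
  · nth_rewrite 1 [← posPart_sub_negPart x]
    abel

/-- if every upward directed norm bounded subset of the positive cone
of `Y` has an upper bound in `Y`, and `Y` is a closed ideal of a Banach lattice
`X`, then `Y` is a projection band; in particular each set
`{y ∈ Y : 0 ≤ y ≤ x}` (`x ∈ X₊`) has a maximum element in `Y`. -/
theorem stmt_19 {X : Type*} [NormedAddCommGroup X] [Lattice X] [HasSolidNorm X]
    [IsOrderedAddMonoid X] [NormedSpace ℝ X]
    [CompleteSpace X]
    (Y : Submodule ℝ X) (hYcl : IsClosed (Y : Set X))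
    (hYsolid : ∀ x : X, ∀ y ∈ Y, |x| ≤ |y| → x ∈ Y)
    (hYdir : ∀ S : Set X, S ⊆ {y : X | y ∈ Y ∧ 0 ≤ y} → DirectedOn (· ≤ ·) S →
      Bornology.IsBounded S → ∃ u ∈ Y, ∀ s ∈ S, s ≤ u) :
    (∀ x : X, 0 ≤ x →
      ∃ m, m ∈ Y ∧ 0 ≤ m ∧ m ≤ x ∧ ∀ y ∈ Y, 0 ≤ y → y ≤ x → y ≤ m) ∧
    (∀ x : X, ∃ u ∈ Y, ∃ v : X, (∀ w ∈ Y, |w| ⊓ |v| = 0) ∧ x = u + v) :=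
  stmt_19_general Y hYsolid hYdir
end
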